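/- Let N_S, N_R be positive integers and N = N_S + N_R. If C ∈ ℝ^{N_S×d} and D ∈ ℝ^{N_R×d} have full row rank, then the (N_S+N_R)×(N_S+N_R) symmetric block matrix Σ = [[(1/3)CCᵀ, (1/2)CDᵀ],[(1/2)DCᵀ, DDᵀ]] (i.e. Σ_SS = (1/3)·a_S, Σ_SR = (1/2)·B, Σ_RS = (1/2)·Bᵀ, Σ_RR = a_R with a_S = CCᵀ, a_R = DDᵀ, B = CDᵀ) is positive definite. -/

import Mathlib

open Matrix

lemma rows_li_of_rank {m d : ℕ} (A : Matrix (Fin m) (Fin d) ℝ) (h : A.rank = m) :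
    Function.Injective A.vecMul := by
  rw [Matrix.vecMul_injective_iff]
  rw [Matrix.rank_eq_finrank_span_row] at h
  exact linearIndependent_iff_card_eq_finrank_span.mpr
    (by simpa [Set.finrank] using ((Fintype.card_fin m).trans h.symm))

/-- Positive definiteness of the block matrix Σ^{(I)} (Lemma 1 of the paper):
if `C : ℝ^{N_S × d}` and `D : ℝ^{N_R × d}` have full row rank, then
`Σ = [[(1/3)CCᵀ, (1/2)CDᵀ],[(1/2)DCᵀ, DDᵀ]]` is positive definite. -/
theorem stmt_0 (NS NR d : ℕ) (hNS : 0 < NS) (hNR : 0 < NR) (hd : 1 ≤ d)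
    (C : Matrix (Fin NS) (Fin d) ℝ) (D : Matrix (Fin NR) (Fin d) ℝ)
    (hC : C.rank = NS) (hD : D.rank = NR) :
    (Matrix.fromBlocks
      ((1/3 : ℝ) • (C * Cᵀ)) ((1/2 : ℝ) • (C * Dᵀ))
      ((1/2 : ℝ) • (D * Cᵀ)) (D * Dᵀ)).PosDef := by
  set a : ℝ := Real.sqrt (1/3) with ha
  set b : ℝ := Real.sqrt 3 / 2 with hb
  have ha0 : 0 < a := Real.sqrt_pos.mpr (by norm_num)
  have ha2 : a * a = 1/3 := Real.mul_self_sqrt (by norm_num)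
  have hab : a * b = 1/2 := by
    have h3 : Real.sqrt (1/3) * Real.sqrt 3 = 1 := by
      rw [← Real.sqrt_mul (by norm_num)]; norm_num
    rw [ha, hb, ← mul_div_assoc, h3]
  have hb2 : b * b + (1/2 : ℝ) * (1/2) = 1 := by
    have h3 : Real.sqrt 3 * Real.sqrt 3 = 3 := Real.mul_self_sqrt (by norm_num)
    rw [hb]; field_simp; linarith
  set M : Matrix (Fin NS ⊕ Fin NR) (Fin d ⊕ Fin d) ℝ :=
    fromBlocks (a • C) 0 (b • D) ((1/2 : ℝ) • D) with hM
  have hEq : (Matrix.fromBlocks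
      ((1/3 : ℝ) • (C * Cᵀ)) ((1/2 : ℝ) • (C * Dᵀ))
      ((1/2 : ℝ) • (D * Cᵀ)) (D * Dᵀ)) = M * Mᵀ := by
    rw [hM, fromBlocks_transpose, fromBlocks_multiply]
    have hb2' : b * b + (2:ℝ)⁻¹ * 2⁻¹ = 1 := by rw [← hb2]; norm_num
    congr 1 <;> simp [Matrix.smul_mul, Matrix.mul_smul, smul_smul, ha2, hab,
      mul_comm b a, ← add_smul, hb2']
  rw [hEq]
  refine posDef_iff_dotProduct_mulVec.mpr ⟨(posSemidef_self_mul_conjTranspose M).1, fun x hx => ?_⟩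
  have key : (star x) ⬝ᵥ ((M * Mᵀ) *ᵥ x) = (x ᵥ* M) ⬝ᵥ (x ᵥ* M) := by
    rw [← mulVec_mulVec, dotProduct_mulVec, mulVec_transpose]
    simp
  have hy : x ᵥ* M ≠ 0 := by
    intro h0
    apply hx
    have h1 : ∀ j, (x ᵥ* M) (Sum.inl j) = 0 := fun j => by rw [h0]; rfl
    have h2 : ∀ j, (x ᵥ* M) (Sum.inr j) = 0 := fun j => by rw [h0]; rfl
    set u : Fin NS → ℝ := x ∘ Sum.inl
    set v : Fin NR → ℝ := x ∘ Sum.inr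
    have hvM : ∀ j, (u ᵥ* (a • C)) j + (v ᵥ* (b • D)) j = 0 := by
      intro j; have := h1 j
      simpa [hM, vecMul_fromBlocks] using this
    have hvM2 : ∀ j, (v ᵥ* ((1/2 : ℝ) • D)) j = 0 := by
      intro j; have := h2 j
      simpa [hM, vecMul_fromBlocks] using this
    have hv : v = 0 := by
      apply rows_li_of_rank D hD
      show v ᵥ* D = (0 : Fin NR → ℝ) ᵥ* D
      rw [zero_vecMul]
      funext j
      have h' : (v ᵥ* ((1/2 : ℝ) • D)) j = (1/2 : ℝ) * (v ᵥ* D) j := by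
        simp [vecMul, dotProduct, Finset.mul_sum]; exact Finset.sum_congr rfl fun i _ => by ring
      have := hvM2 j
      rw [h'] at this
      simpa using this
    have hu : u = 0 := by
      apply rows_li_of_rank C hC
      show u ᵥ* C = (0 : Fin NS → ℝ) ᵥ* C
      rw [zero_vecMul]
      funext j
      have h' : (u ᵥ* (a • C)) j = a * (u ᵥ* C) j := by
        simp [vecMul, dotProduct, Finset.mul_sum]; exact Finset.sum_congr rfl fun i _ => by ring
      have := hvM j
      rw [hv, h'] at this
      simp only [zero_vecMul, Pi.zero_apply, add_zero] at this
      have : a * (u ᵥ* C) j = 0 := by simpa using this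
      exact (mul_eq_zero.mp this).resolve_left (ne_of_gt ha0)
    funext i
    cases i with
    | inl i => exact congrFun hu i
    | inr i => exact congrFun hv i
  rw [key]
  obtain ⟨i, hi⟩ := Function.ne_iff.mp hy
  have h1' : 0 < ∑ i, (x ᵥ* M) i * (x ᵥ* M) i :=
    Finset.sum_pos' (fun i _ => mul_self_nonneg _) ⟨i, Finset.mem_univ i, mul_self_pos.mpr hi⟩
  simpa [dotProduct] using h1'
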